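/- Let G be a graph with at least 3 vertices and t ≥ 1, and let φ be an automorphism of μ_t(G). If φ(w) is a vertex at level s for some 0 ≤ s ≤ t−1, then G has no dominating vertex. -/

import Mathlib

/-!
An automorphism preserves degrees and the number of vertices reachable by walks of length two.
The root has degree `n = |V(G)|` and reaches at most `n + 1` vertices in two steps (itself and
level `t - 1`). A vertex `u_v^s` with `s < t` has degree `2 deg v`, so `deg v = n / 2`. If `x`
dominates `G`, this forces `v ≠ x` and `deg v ≥ 2`, so every vertex of `G` is joined to `v` by a
walk of length two; then `u_v^s` reaches two entire levels in two steps, `2n > n + 1` vertices.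
-/

open SimpleGraph

/-- The generalized Mycielskian `μ_t(G)`: levels `0,…,t` of copies of `V(G)`
plus a root `none`. Level-0 vertices are the original vertices. -/
def genMyc {V : Type*} (G : SimpleGraph V) (t : ℕ) :
    SimpleGraph (Option (Fin (t + 1) × V)) :=
  SimpleGraph.fromRel fun a b =>
    match a, b with
    | some (s, i), some (s', j) =>
        ((s : ℕ) = 0 ∧ (s' : ℕ) = 0 ∧ G.Adj i j) ∨
        ((s' : ℕ) = (s : ℕ) + 1 ∧ G.Adj i j)
    | some (s, _), none => (s : ℕ) = t
    | _, _ => False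

/-- The (traditional) Mycielskian `μ(G)`. -/
def myc {V : Type*} (G : SimpleGraph V) : SimpleGraph (Option (Fin 2 × V)) :=
  genMyc G 1

/-- The star `K_{1,m}` with center `0` and `m` leaves. -/
def starG (m : ℕ) : SimpleGraph (Fin (m + 1)) :=
  SimpleGraph.fromRel fun a _ => a = 0

/-- A `d`-coloring is distinguishing if only the trivial automorphism preserves it. -/
def IsDistinguishing {V : Type*} (H : SimpleGraph V) (d : ℕ) (c : V → Fin d) : Prop :=
  ∀ φ : H ≃g H, (∀ v, c (φ v) = c v) → ∀ v, φ v = v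

/-- The distinguishing number of a graph. -/
noncomputable def distNum {V : Type*} (H : SimpleGraph V) : ℕ :=
  sInf {d | ∃ c : V → Fin d, IsDistinguishing H d c}

namespace SimpleGraph

section TwoStep

variable {W W' : Type*} {H : SimpleGraph W} {H' : SimpleGraph W'}

def twoStepSet (H : SimpleGraph W) (a : W) : Set W :=
  {y | ∃ u, H.Adj a u ∧ H.Adj u y}

theorem Iso.image_twoStepSet (f : H ≃g H') (a : W) :
    f '' H.twoStepSet a = H'.twoStepSet (f a) := by
  ext y
  constructor
  · rintro ⟨y, ⟨u, hau, huy⟩, rfl⟩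
    exact ⟨f u, f.map_adj_iff.mpr hau, f.map_adj_iff.mpr huy⟩
  · rintro ⟨u, hau, huy⟩
    refine ⟨f.symm y, ⟨f.symm u, ?_, ?_⟩, f.apply_symm_apply y⟩
    · simpa using f.symm.map_adj_iff.mpr hau
    · exact f.symm.map_adj_iff.mpr huy

theorem Iso.ncard_neighborSet (f : H ≃g H') (a : W) :
    (H'.neighborSet (f a)).ncard = (H.neighborSet a).ncard := by
  rw [← f.image_neighborSet, Set.ncard_image_of_injective _ f.injective]

theorem Iso.ncard_twoStepSet (f : H ≃g H') (a : W) :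
    (H'.twoStepSet (f a)).ncard = (H.twoStepSet a).ncard := by
  rw [← f.image_twoStepSet, Set.ncard_image_of_injective _ f.injective]

end TwoStep

variable {V : Type*} {G : SimpleGraph V} {x v : V}

theorem ncard_neighborSet_of_forall_adj [Finite V] (hx : ∀ y ≠ x, G.Adj x y) :
    (G.neighborSet x).ncard = Nat.card V - 1 := by
  have hN : G.neighborSet x = {x}ᶜ := by
    ext y
    exact ⟨fun hy => hy.ne.symm, hx y⟩
  rw [hN, Set.ncard_compl, Set.ncard_singleton]

theorem exists_adj_adj_of_forall_adj (hx : ∀ y ≠ x, G.Adj x y) (hvx : v ≠ x)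
    (hv : 1 < (G.neighborSet v).ncard) (k : V) : ∃ m, G.Adj v m ∧ G.Adj m k := by
  obtain ⟨z, hvz, hzx⟩ := Set.exists_ne_of_one_lt_ncard hv x
  by_cases hkx : k = x
  · exact ⟨z, hvz, hkx ▸ (hx z hzx).symm⟩
  · exact ⟨x, (hx v hvx).symm, hx k hkx⟩

end SimpleGraph

section GenMyc

open SimpleGraph

variable {V : Type*} {G : SimpleGraph V} {t : ℕ}

def LevelsAdj (a b : ℕ) : Prop :=
  (a = 0 ∧ b = 0) ∨ b = a + 1 ∨ a = b + 1

theorem genMyc_adj_some_some {a b : Fin (t + 1)} {i j : V} :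
    (genMyc G t).Adj (some (a, i)) (some (b, j)) ↔ G.Adj i j ∧ LevelsAdj a b := by
  simp only [genMyc, fromRel_adj, ne_eq, Option.some.injEq, Prod.mk.injEq, LevelsAdj]
  constructor
  · rintro ⟨-, (⟨h0, h0', hij⟩ | ⟨hab, hij⟩) | (⟨h0, h0', hji⟩ | ⟨hba, hji⟩)⟩
    exacts [⟨hij, .inl ⟨h0, h0'⟩⟩, ⟨hij, .inr (.inl hab)⟩, ⟨hji.symm, .inl ⟨h0', h0⟩⟩,
      ⟨hji.symm, .inr (.inr hba)⟩]
  · rintro ⟨hij, hab⟩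
    refine ⟨fun ⟨hab', hij'⟩ => G.irrefl (hij' ▸ hij), ?_⟩
    rcases hab with ⟨h0, h0'⟩ | hab | hba
    exacts [.inl (.inl ⟨h0, h0', hij⟩), .inl (.inr ⟨hab, hij⟩), .inr (.inr ⟨hba, hij.symm⟩)]

theorem genMyc_adj_none_some {b : Fin (t + 1)} {i : V} :
    (genMyc G t).Adj none (some (b, i)) ↔ (b : ℕ) = t := by
  simp [genMyc]

theorem ncard_image_level (c : Fin (t + 1)) (S : Set V) :
    ((fun k => (some (c, k) : Option (Fin (t + 1) × V))) '' S).ncard = S.ncard :=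
  Set.ncard_image_of_injective S ((Option.some_injective _).comp (Prod.mk_right_injective c))

theorem disjoint_image_level {c c' : Fin (t + 1)} (hc : (c : ℕ) ≠ c') (S S' : Set V) :
    Disjoint ((fun k => (some (c, k) : Option (Fin (t + 1) × V))) '' S)
      ((fun k => some (c', k)) '' S') := by
  rw [Set.disjoint_left]
  rintro _ ⟨k, -, rfl⟩ ⟨k', -, hk'⟩
  simp only [Option.some.injEq, Prod.mk.injEq] at hk'
  exact hc (congrArg Fin.val hk'.1.symm)

theorem genMyc_neighborSet_none :
    (genMyc G t).neighborSet none = (fun k => some (Fin.last t, k)) '' Set.univ := by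
  ext (_ | ⟨b, i⟩)
  · simp
  · simp [genMyc_adj_none_some, Fin.ext_iff, eq_comm]

theorem genMyc_neighborSet_some {s : Fin (t + 1)} (hs : (s : ℕ) < t) (v : V) :
    (genMyc G t).neighborSet (some (s, v)) =
      (fun k => some (⟨s - 1, by omega⟩, k)) '' G.neighborSet v ∪
        (fun k => some (⟨s + 1, by omega⟩, k)) '' G.neighborSet v := by
  ext (_ | ⟨b, i⟩)
  · simp [(genMyc G t).adj_comm _ none, genMyc_adj_none_some, hs.ne]
  · simp only [mem_neighborSet, genMyc_adj_some_some, LevelsAdj, Set.mem_union, Set.mem_image,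
      Option.some.injEq, Prod.mk.injEq, Fin.ext_iff, exists_eq_right_right, ← and_or_left]
    exact and_congr_right fun _ => by omega

theorem ncard_genMyc_neighborSet_none [Finite V] :
    ((genMyc G t).neighborSet none).ncard = Nat.card V := by
  rw [genMyc_neighborSet_none, ncard_image_level, Set.ncard_univ]

theorem ncard_genMyc_neighborSet_some [Finite V] {s : Fin (t + 1)} (hs : (s : ℕ) < t) (v : V) :
    ((genMyc G t).neighborSet (some (s, v))).ncard = 2 * (G.neighborSet v).ncard := by
  rw [genMyc_neighborSet_some hs, Set.ncard_union_eq (disjoint_image_level (by simp) _ _),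
    ncard_image_level, ncard_image_level, two_mul]

theorem genMyc_twoStepSet_none_subset :
    (genMyc G t).twoStepSet none ⊆
      insert none ((fun k => some (⟨t - 1, by omega⟩, k)) '' Set.univ) := by
  rintro (_ | ⟨c, j⟩) ⟨(_ | ⟨b, i⟩), hu, hy⟩
  · exact Set.mem_insert _ _
  · exact Set.mem_insert _ _
  · exact absurd hu (genMyc G t).irrefl
  · rw [genMyc_adj_none_some] at hu
    rw [genMyc_adj_some_some, LevelsAdj] at hy
    refine Set.mem_insert_of_mem _ ⟨j, trivial, ?_⟩
    have := c.isLt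
    simp only [Option.some.injEq, Prod.mk.injEq, Fin.ext_iff, and_true]
    omega

theorem ncard_genMyc_twoStepSet_none_le [Finite V] :
    ((genMyc G t).twoStepSet none).ncard ≤ Nat.card V + 1 :=
  (Set.ncard_le_ncard genMyc_twoStepSet_none_subset).trans <| (Set.ncard_insert_le _ _).trans <| by
    rw [ncard_image_level, Set.ncard_univ]

theorem image_level_subset_genMyc_twoStepSet {s p r : Fin (t + 1)} {v : V}
    (hcover : ∀ k, ∃ m, G.Adj v m ∧ G.Adj m k) (hsp : LevelsAdj s p) (hpr : LevelsAdj p r) :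
    (fun k => some (r, k)) '' Set.univ ⊆ (genMyc G t).twoStepSet (some (s, v)) := by
  rintro _ ⟨k, -, rfl⟩
  obtain ⟨m, hvm, hmk⟩ := hcover k
  exact ⟨some (p, m), genMyc_adj_some_some.mpr ⟨hvm, hsp⟩, genMyc_adj_some_some.mpr ⟨hmk, hpr⟩⟩

theorem two_mul_card_le_ncard_genMyc_twoStepSet [Finite V] {s : Fin (t + 1)}
    (hs : (s : ℕ) < t) {v : V} (hcover : ∀ k, ∃ m, G.Adj v m ∧ G.Adj m k) :
    2 * Nat.card V ≤ ((genMyc G t).twoStepSet (some (s, v))).ncard := by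
  -- level `s` is reached through level `s + 1`, level `r` through level `s - 1`
  -- (truncated subtraction makes both `s - 1` and `r` come out right for `s ≤ 1`)
  let r : Fin (t + 1) := ⟨if (s : ℕ) = 0 then 1 else s - 2, by split_ifs <;> omega⟩
  have hsame := image_level_subset_genMyc_twoStepSet (s := s) (p := ⟨s + 1, by omega⟩) (r := s)
    hcover (by simp [LevelsAdj]) (by simp [LevelsAdj])
  have hother := image_level_subset_genMyc_twoStepSet (s := s) (p := ⟨s - 1, by omega⟩) (r := r)
    hcover (by simp only [LevelsAdj]; omega) (by simp only [LevelsAdj, r]; split_ifs <;> omega)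
  calc 2 * Nat.card V
      = ((fun k => some (s, k)) '' Set.univ ∪ (fun k => some (r, k)) '' Set.univ).ncard := by
        rw [Set.ncard_union_eq (disjoint_image_level (by simp only [r]; split_ifs <;> omega) _ _),
          ncard_image_level, ncard_image_level, Set.ncard_univ, two_mul]
    _ ≤ _ := Set.ncard_le_ncard (Set.union_subset hsame hother)

end GenMyc

theorem stmt_6_general {V : Type*} [Fintype V] (G : SimpleGraph V)
    (hn : 3 ≤ Fintype.card V) (t : ℕ)
    (φ : genMyc G t ≃g genMyc G t) (s : Fin (t + 1)) (v : V)
    (hs : (s : ℕ) < t) (h : φ none = some (s, v)) :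
    ¬ ∃ x : V, ∀ y : V, y ≠ x → G.Adj x y := by
  rintro ⟨x, hx⟩
  rw [← Nat.card_eq_fintype_card] at hn
  have hdeg : Nat.card V = 2 * (G.neighborSet v).ncard := by
    rw [← ncard_genMyc_neighborSet_none (G := G) (t := t), ← ncard_genMyc_neighborSet_some hs,
      ← h, φ.ncard_neighborSet]
  have hvx : v ≠ x := by
    rintro rfl
    rw [ncard_neighborSet_of_forall_adj hx] at hdeg
    omega
  have hcover := exists_adj_adj_of_forall_adj hx hvx (by omega)
  have hlower := two_mul_card_le_ncard_genMyc_twoStepSet hs hcover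
  rw [← h, φ.ncard_twoStepSet] at hlower
  have hupper := ncard_genMyc_twoStepSet_none_le (G := G) (t := t)
  omega

theorem stmt_6 {V : Type*} [Fintype V] (G : SimpleGraph V)
    (hn : 3 ≤ Fintype.card V) (t : ℕ) (ht : 1 ≤ t)
    (φ : genMyc G t ≃g genMyc G t) (s : Fin (t + 1)) (v : V)
    (hs : (s : ℕ) < t) (h : φ none = some (s, v)) :
    ¬ ∃ x : V, ∀ y : V, y ≠ x → G.Adj x y :=
  stmt_6_general G hn t φ s v hs h
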